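/- arXiv:1307.3794 — 13 statements merged into one kernel-verified Lean document; each statement's English description precedes it below -/
import Mathlib

section
/- The function l(x, β) = x^{n+1}/(c + μβ)^n + b·x is convex on the domain {(x, β) : x ≥ 0, β ≥ 0}, where c > 0, μ ≥ 0, b ≥ 0, and n ≥ 1 is a natural number. -/
/-!
The perspective `(x, y) ↦ y f(x / y)` of a convex function `f` is convex on `y > 0`: at a convex
combination, `x / y` is a convex combination of the ratios `xᵢ / yᵢ` with weights `aᵢ yᵢ / y`.
Applied to `f t = t ^ (n + 1)` this makes `x ^ (n + 1) / y ^ n` convex, and `l` is obtained from it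
by the affine substitution `y = c + μ β` (positive because `c > 0`, `μ, β ≥ 0`) and adding a linear
term.
-/

open Set

section Perspective

variable {E : Type*} [AddCommGroup E] [Module ℝ E] {s : Set E} {f : E → ℝ}

lemma inv_smul_add_eq_add_smul_inv_smul {x₁ x₂ : E} {y₁ y₂ a b : ℝ} (hy₁ : y₁ ≠ 0) (hy₂ : y₂ ≠ 0)
    (hY : a * y₁ + b * y₂ ≠ 0) :
    (a * y₁ + b * y₂)⁻¹ • (a • x₁ + b • x₂) =
      (a * y₁ / (a * y₁ + b * y₂)) • (y₁⁻¹ • x₁) + (b * y₂ / (a * y₁ + b * y₂)) • (y₂⁻¹ • x₂) := by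
  match_scalars <;> field_simp

lemma ConvexOn.perspective_mem_and_le (hf : ConvexOn ℝ s f) {p q : E × ℝ}
    (hp : 0 < p.2 ∧ p.2⁻¹ • p.1 ∈ s) (hq : 0 < q.2 ∧ q.2⁻¹ • q.1 ∈ s)
    {a b : ℝ} (ha : 0 ≤ a) (hb : 0 ≤ b) (hab : a + b = 1) :
    (0 < (a • p + b • q).2 ∧ (a • p + b • q).2⁻¹ • (a • p + b • q).1 ∈ s) ∧
      (a • p + b • q).2 * f ((a • p + b • q).2⁻¹ • (a • p + b • q).1) ≤
        a * (p.2 * f (p.2⁻¹ • p.1)) + b * (q.2 * f (q.2⁻¹ • q.1)) := by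
  obtain ⟨x₁, y₁⟩ := p
  obtain ⟨x₂, y₂⟩ := q
  simp only [Prod.fst_add, Prod.snd_add, Prod.smul_fst, Prod.smul_snd, smul_eq_mul] at *
  set Y := a * y₁ + b * y₂
  have hY : 0 < Y := convex_Ioi (0 : ℝ) hp.1 hq.1 ha hb hab
  have hwa : 0 ≤ a * y₁ / Y := by have := hp.1; positivity
  have hwb : 0 ≤ b * y₂ / Y := by have := hq.1; positivity
  have hw : a * y₁ / Y + b * y₂ / Y = 1 := by rw [← add_div, div_self hY.ne']
  rw [inv_smul_add_eq_add_smul_inv_smul hp.1.ne' hq.1.ne' hY.ne']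
  refine ⟨⟨hY, hf.1 hp.2 hq.2 hwa hwb hw⟩, ?_⟩
  calc Y * f ((a * y₁ / Y) • (y₁⁻¹ • x₁) + (b * y₂ / Y) • (y₂⁻¹ • x₂))
      ≤ Y * ((a * y₁ / Y) • f (y₁⁻¹ • x₁) + (b * y₂ / Y) • f (y₂⁻¹ • x₂)) :=
        mul_le_mul_of_nonneg_left (hf.2 hp.2 hq.2 hwa hwb hw) hY.le
    _ = a * (y₁ * f (y₁⁻¹ • x₁)) + b * (y₂ * f (y₂⁻¹ • x₂)) := by
        simp only [smul_eq_mul]; field_simp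

theorem ConvexOn.perspective (hf : ConvexOn ℝ s f) :
    ConvexOn ℝ {p : E × ℝ | 0 < p.2 ∧ p.2⁻¹ • p.1 ∈ s} (fun p => p.2 * f (p.2⁻¹ • p.1)) :=
  ⟨fun _ hp _ hq _ _ ha hb hab => (hf.perspective_mem_and_le hp hq ha hb hab).1,
    fun _ hp _ hq _ _ ha hb hab => (hf.perspective_mem_and_le hp hq ha hb hab).2⟩

end Perspective

theorem convexOn_pow_succ_div_pow (n : ℕ) :
    ConvexOn ℝ {p : ℝ × ℝ | 0 ≤ p.1 ∧ 0 < p.2} (fun p => p.1 ^ (n + 1) / p.2 ^ n) := by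
  have hdom : {p : ℝ × ℝ | 0 ≤ p.1 ∧ 0 < p.2} = {p | 0 < p.2 ∧ p.2⁻¹ • p.1 ∈ Ici 0} := by
    ext ⟨x, y⟩
    simp only [mem_ofPred_eq, mem_Ici, smul_eq_mul]
    constructor
    · rintro ⟨hx, hy⟩; exact ⟨hy, by positivity⟩
    · rintro ⟨hy, hxy⟩; exact ⟨(mul_nonneg_iff_of_pos_left (inv_pos.2 hy)).1 hxy, hy⟩
  rw [hdom]
  refine (convexOn_pow (n + 1)).perspective.congr fun p hp => ?_
  have := hp.1.ne'
  simp only [smul_eq_mul, mul_pow, inv_pow, pow_succ]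
  field_simp

theorem stmt_1_general (n : ℕ) (c μ b : ℝ) (hc : 0 < c) (hμ : 0 ≤ μ) :
    ConvexOn ℝ {p : ℝ × ℝ | 0 ≤ p.1 ∧ 0 ≤ p.2}
      (fun p : ℝ × ℝ => p.1 ^ (n + 1) / (c + μ * p.2) ^ n + b * p.1) := by
  let g : ℝ × ℝ →ᵃ[ℝ] ℝ × ℝ :=
    ⟨fun p => (p.1, c + μ * p.2), (LinearMap.id).prodMap (μ • LinearMap.id),
      fun p v => by ext <;> simp; ring⟩
  have hdom : Convex ℝ {p : ℝ × ℝ | 0 ≤ p.1 ∧ 0 ≤ p.2} := (convex_Ici 0).prod (convex_Ici 0)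
  have hpow := ((convexOn_pow_succ_div_pow n).comp_affineMap g).subset
    (fun p hp => ⟨hp.1, by have := hp.2; show 0 < c + μ * p.2; positivity⟩) hdom
  refine (hpow.add ((b • LinearMap.fst ℝ ℝ ℝ).convexOn hdom)).congr fun p _ => ?_
  simp [g]

theorem stmt_1 (n : ℕ) (hn : 1 ≤ n) (c μ b : ℝ) (hc : 0 < c) (hμ : 0 ≤ μ) (hb : 0 ≤ b) :
    ConvexOn ℝ {p : ℝ × ℝ | 0 ≤ p.1 ∧ 0 ≤ p.2}
      (fun p : ℝ × ℝ => p.1 ^ (n + 1) / (c + μ * p.2) ^ n + b * p.1) :=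
  stmt_1_general n c μ b hc hμ
end

section
/- For any vector α = (α₁, α₂) and the Hessian H of l(x,β) = x^{n+1}/(c+μβ)^n + b·x at a point with x ≥ 0, β ≥ 0, we have αᵀHα = (n(n+1)x^{n−1}/(c+μβ)^n) · (α₁ − α₂·xμ/(c+μβ))² ≥ 0. -/
theorem stmt_2 (n : ℕ) (hn : 1 ≤ n) (c μ b x β α₁ α₂ : ℝ)
    (hc : 0 < c) (hμ : 0 ≤ μ) (hb : 0 ≤ b) (hx : 0 ≤ x) (hβ : 0 ≤ β) :
    α₁ ^ 2 * ((n + 1 : ℝ) * n * x ^ (n - 1) / (c + μ * β) ^ n)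
      + 2 * α₁ * α₂ * (-(n * (n + 1 : ℝ) * μ * x ^ n / (c + μ * β) ^ (n + 1)))
      + α₂ ^ 2 * ((n + 1 : ℝ) * n * μ ^ 2 * x ^ (n + 1) / (c + μ * β) ^ (n + 2))
    = (n * (n + 1 : ℝ) * x ^ (n - 1) / (c + μ * β) ^ n)
        * (α₁ - α₂ * (x * μ / (c + μ * β))) ^ 2 ∧
    0 ≤ (n * (n + 1 : ℝ) * x ^ (n - 1) / (c + μ * β) ^ n)
        * (α₁ - α₂ * (x * μ / (c + μ * β))) ^ 2 := by
  have hd : 0 < c + μ * β := by positivity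
  obtain ⟨m, rfl⟩ : ∃ m, n = m + 1 := ⟨n - 1, (Nat.succ_pred_eq_of_pos hn).symm⟩
  constructor
  · have hd' : (c + μ * β) ≠ 0 := ne_of_gt hd
    simp only [Nat.add_sub_cancel]
    field_simp
    push_cast
    ring
  · positivity
end

section
/- Let r₁, …, r_k : [0,1] → ℝ_{>0} be twice-differentiable functions such that for each e, r_e satisfies r_e'' (λ) = (2/r_e(λ)) (r_e'(λ))² for all λ. Let r_p(λ) = Σ_e r_e(λ). Then r_p(λ)·r_p''(λ) ≥ 2 (r_p'(λ))² for all λ, and consequently c_p(λ) = 1/r_p(λ) is concave on [0,1]. -/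
/-!
Cauchy–Schwarz in Sedrakyan's form gives `(∑ r'_e)² ≤ (∑ r_e) · ∑ (r'_e)² / r_e`, and the
differential equation turns the right-hand sum into `½ ∑ r''_e`. For a positive `f` the second
derivative of `1 / f` is `(2 f'² - f f'') / f³`, so `f f'' ≥ 2 f'²` makes `1 / f` concave.
-/

open Set

theorem Finset.two_mul_sq_sum_le_sum_mul_sum {ι : Type*} (s : Finset ι) {a b c : ι → ℝ}
    (ha : ∀ i ∈ s, 0 < a i) (hc : ∀ i ∈ s, c i = 2 / a i * b i ^ 2) :
    2 * (∑ i ∈ s, b i) ^ 2 ≤ (∑ i ∈ s, a i) * ∑ i ∈ s, c i := by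
  have hCS : (∑ i ∈ s, b i) ^ 2 ≤ (∑ i ∈ s, a i) * ∑ i ∈ s, b i ^ 2 / a i :=
    Finset.sum_sq_le_sum_mul_sum_of_sq_le_mul s (fun i hi => (ha i hi).le)
      (fun i hi => div_nonneg (sq_nonneg _) (ha i hi).le)
      (fun i hi => by rw [mul_div_cancel₀ _ (ha i hi).ne'])
  have hsum : ∑ i ∈ s, c i = 2 * ∑ i ∈ s, b i ^ 2 / a i := by
    rw [Finset.mul_sum]
    exact Finset.sum_congr rfl fun i hi => by rw [hc i hi]; ring
  rw [hsum]
  linarith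

theorem HasDerivAt.neg_div_sq {f f' : ℝ → ℝ} {x f''x : ℝ} (hf : HasDerivAt f (f' x) x)
    (hf' : HasDerivAt f' f''x x) (hx : f x ≠ 0) :
    HasDerivAt (fun y => -f' y / f y ^ 2) ((2 * f' x ^ 2 - f x * f''x) / f x ^ 3) x := by
  refine (hf'.neg.div (hf.pow 2) (pow_ne_zero 2 hx)).congr_deriv ?_
  simp only [Pi.pow_apply, Pi.neg_apply]
  field_simp
  ring

theorem concaveOn_inv_of_two_mul_sq_deriv_le {D : Set ℝ} (hD : Convex ℝ D) {f f' f'' : ℝ → ℝ}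
    (hcont : ContinuousOn f D) (hf : ∀ x ∈ interior D, HasDerivAt f (f' x) x)
    (hf' : ∀ x ∈ interior D, HasDerivAt f' (f'' x) x) (hpos : ∀ x ∈ D, 0 < f x)
    (hineq : ∀ x ∈ interior D, 2 * f' x ^ 2 ≤ f x * f'' x) :
    ConcaveOn ℝ D fun x => (f x)⁻¹ := by
  have hpos' : ∀ x ∈ interior D, 0 < f x := fun x hx => hpos x (interior_subset hx)
  refine concaveOn_of_hasDerivWithinAt2_nonpos hD (hcont.inv₀ fun x hx => (hpos x hx).ne')
    (f' := fun x => -f' x / f x ^ 2)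
    (f'' := fun x => (2 * f' x ^ 2 - f x * f'' x) / f x ^ 3)
    (fun x hx => ?_) (fun x hx => ?_) (fun x hx => ?_)
  · exact ((hf x hx).inv (hpos' x hx).ne').hasDerivWithinAt
  · exact ((hf x hx).neg_div_sq (hf' x hx) (hpos' x hx).ne').hasDerivWithinAt
  · have := hpos' x hx
    exact div_nonpos_of_nonpos_of_nonneg (by linarith [hineq x hx]) (by positivity)

theorem stmt_3 (k : ℕ) (r r' r'' : Fin k → ℝ → ℝ)
    (hpos : ∀ e, ∀ l ∈ Icc (0 : ℝ) 1, 0 < r e l)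
    (hderiv1 : ∀ e, ∀ l ∈ Icc (0 : ℝ) 1, HasDerivAt (r e) (r' e l) l)
    (hderiv2 : ∀ e, ∀ l ∈ Icc (0 : ℝ) 1, HasDerivAt (r' e) (r'' e l) l)
    (hode : ∀ e, ∀ l ∈ Icc (0 : ℝ) 1, r'' e l = (2 / r e l) * (r' e l) ^ 2) :
    (∀ l ∈ Icc (0 : ℝ) 1,
        (∑ e, r e l) * (∑ e, r'' e l) ≥ 2 * (∑ e, r' e l) ^ 2) ∧
    ConcaveOn ℝ (Icc (0 : ℝ) 1) (fun l => 1 / (∑ e, r e l)) := by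
  have key : ∀ l ∈ Icc (0 : ℝ) 1, (∑ e, r e l) * (∑ e, r'' e l) ≥ 2 * (∑ e, r' e l) ^ 2 :=
    fun l hl => Finset.univ.two_mul_sq_sum_le_sum_mul_sum (fun e _ => hpos e l hl)
      (fun e _ => hode e l hl)
  refine ⟨key, ?_⟩
  rcases isEmpty_or_nonempty (Fin k) with hk | hk
  · simpa using concaveOn_const (0 : ℝ) (convex_Icc (0 : ℝ) 1)
  have hsum : ∀ l ∈ Icc (0 : ℝ) 1, HasDerivAt (fun l => ∑ e, r e l) (∑ e, r' e l) l :=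
    fun l hl => HasDerivAt.fun_sum fun e _ => hderiv1 e l hl
  simp only [one_div]
  exact concaveOn_inv_of_two_mul_sq_deriv_le (convex_Icc 0 1)
    (fun l hl => (hsum l hl).continuousAt.continuousWithinAt)
    (fun l hl => hsum l (interior_subset hl))
    (fun l hl => HasDerivAt.fun_sum fun e _ => hderiv2 e l (interior_subset hl))
    (fun l hl => Finset.sum_pos (fun e _ => hpos e l hl) Finset.univ_nonempty)
    (fun l hl => key l (interior_subset hl))
end

section
/- Let c₁, …, c_k : [0,1] → ℝ_{>0} be positive affine functions and c_p(λ) = 1/(Σ_e 1/c_e(λ)). If c_p''(λ̄) = 0 for some λ̄ ∈ (0,1), then c_p is affine on (0,1). -/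
/-!
With weights `w_e = 1 / c_e` and ratios `r_e = c_e' / c_e`, the moments `M_n = ∑ w_e r_e ^ n`
satisfy `M_n' = -(n + 1) M_(n+1)`. Hence `c_p = 1 / M₀` has
`c_p'' = 2 (M₁² - M₀ M₂) / M₀³`, which is `-2 / M₀` times the `w`-weighted variance of the `r_e`.
If it vanishes at `λ̄`, all `r_e(λ̄)` equal one number `t`, so
`c_e(λ) = c_e(λ̄) (1 + t (λ - λ̄))` for every `e` and `c_p` is affine.
-/

open Set Filter Topology

theorem Finset.mul_sum_eq_sum_mul_of_sq_sum_eq {ι : Type*} [Fintype ι] {w r : ι → ℝ}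
    (hw : ∀ i, 0 < w i) (h : (∑ i, w i * r i) ^ 2 = (∑ i, w i) * ∑ i, w i * r i ^ 2) (i : ι) :
    r i * ∑ j, w j = ∑ j, w j * r j := by
  set S := ∑ j, w j
  set t := (∑ j, w j * r j) / S
  have hS : 0 < S := Finset.sum_pos (fun j _ => hw j) ⟨i, Finset.mem_univ i⟩
  have hvar : ∑ j, w j * (r j - t) ^ 2 = 0 := by
    have : ∑ j, w j * (r j - t) ^ 2
        = ∑ j, w j * r j ^ 2 - 2 * t * ∑ j, w j * r j + t ^ 2 * S := by
      simp only [S, Finset.mul_sum, ← Finset.sum_sub_distrib, ← Finset.sum_add_distrib]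
      exact Finset.sum_congr rfl fun j _ => by ring
    rw [this]
    simp only [t]
    field_simp
    linear_combination -h
  have hterm := (Finset.sum_eq_zero_iff_of_nonneg fun j _ => by have := hw j; positivity).1
    hvar i (Finset.mem_univ i)
  have : r i = t := by
    have := (mul_eq_zero.1 hterm).resolve_left (hw i).ne'
    linarith [pow_eq_zero_iff two_ne_zero |>.1 this]
  exact this ▸ div_mul_cancel₀ _ hS.ne'

namespace AffineSeries

variable {ι : Type*} [Fintype ι] (a b : ι → ℝ)

noncomputable def conductance (l : ℝ) : ℝ := 1 / ∑ e, 1 / (a e + b e * l)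

noncomputable def moment (n : ℕ) (l : ℝ) : ℝ := ∑ e, b e ^ n / (a e + b e * l) ^ (n + 1)

lemma conductance_eq_inv_moment_zero : conductance a b = fun l => (moment a b 0 l)⁻¹ := by
  ext l
  simp [conductance, moment]

lemma hasDerivAt_moment (n : ℕ) {l : ℝ} (hl : ∀ e, a e + b e * l ≠ 0) :
    HasDerivAt (moment a b n) (-(n + 1) * moment a b (n + 1) l) l := by
  have hterm : ∀ e, HasDerivAt (fun x => b e ^ n / (a e + b e * x) ^ (n + 1))
      (-(n + 1) * (b e ^ (n + 1) / (a e + b e * l) ^ (n + 2))) l := by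
    intro e
    have hc : HasDerivAt (fun x => a e + b e * x) (b e) l := by
      simpa using ((hasDerivAt_id l).const_mul (b e)).const_add (a e)
    refine ((hasDerivAt_const l (b e ^ n)).fun_div (hc.pow (n + 1))
      (pow_ne_zero _ (hl e))).congr_deriv ?_
    have := hl e
    simp only [Pi.pow_apply]
    push_cast
    field_simp
    ring
  exact (HasDerivAt.fun_sum fun e _ => hterm e).congr_deriv (by simp [moment, Finset.mul_sum])
lemma moment_zero_pos [Nonempty ι] {l : ℝ} (hl : ∀ e, 0 < a e + b e * l) : 0 < moment a b 0 l :=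
  Finset.sum_pos (fun e _ => by simpa using hl e) Finset.univ_nonempty

lemma moment_eq_sum_inv_mul_div_pow (n : ℕ) (l : ℝ) :
    moment a b n l = ∑ e, (a e + b e * l)⁻¹ * (b e / (a e + b e * l)) ^ n :=
  Finset.sum_congr rfl fun e _ => by rw [div_pow, pow_succ, ← div_div]; ring

lemma hasDerivAt_conductance {l : ℝ} (hl : ∀ e, a e + b e * l ≠ 0) (h0 : moment a b 0 l ≠ 0) :
    HasDerivAt (conductance a b) (moment a b 1 l / moment a b 0 l ^ 2) l := by
  rw [conductance_eq_inv_moment_zero]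
  exact ((hasDerivAt_moment a b 0 hl).fun_inv h0).congr_deriv (by simp)

lemma deriv_deriv_conductance [Nonempty ι] {l : ℝ}
    (hpos : ∀ᶠ x in 𝓝 l, ∀ e, 0 < a e + b e * x) :
    deriv (deriv (conductance a b)) l
      = 2 * (moment a b 1 l ^ 2 - moment a b 0 l * moment a b 2 l) / moment a b 0 l ^ 3 := by
  have hderiv : deriv (conductance a b) =ᶠ[𝓝 l] fun x => moment a b 1 x / moment a b 0 x ^ 2 :=
    hpos.mono fun x hx => (hasDerivAt_conductance a b (fun e => (hx e).ne')
      (moment_zero_pos a b hx).ne').deriv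
  have hl : ∀ e, a e + b e * l ≠ 0 := fun e => (hpos.self_of_nhds e).ne'
  have h0 := (moment_zero_pos a b hpos.self_of_nhds).ne'
  rw [hderiv.deriv_eq]
  refine (((hasDerivAt_moment a b 1 hl).fun_div ((hasDerivAt_moment a b 0 hl).fun_pow 2)
    (pow_ne_zero 2 h0))).deriv.trans ?_
  field_simp
  ring

lemma exists_eq_mul_of_sq_moment_one_eq {l : ℝ} (hl : ∀ e, 0 < a e + b e * l)
    (h : moment a b 1 l ^ 2 = moment a b 0 l * moment a b 2 l) :
    ∃ t, ∀ e, b e = t * (a e + b e * l) := by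
  simp only [moment_eq_sum_inv_mul_div_pow] at h
  refine ⟨moment a b 1 l / moment a b 0 l, fun e => ?_⟩
  have hratio : b e / (a e + b e * l) * moment a b 0 l = moment a b 1 l := by
    simpa [moment_eq_sum_inv_mul_div_pow] using
      Finset.mul_sum_eq_sum_mul_of_sq_sum_eq (fun e => inv_pos.2 (hl e)) (by simpa using h) e
  have : Nonempty ι := ⟨e⟩
  have := (moment_zero_pos a b hl).ne'
  have := (hl e).ne'
  rw [← hratio]
  field_simp

lemma conductance_eq_of_forall_eq_mul {t l₀ : ℝ} (h : ∀ e, b e = t * (a e + b e * l₀)) (l : ℝ) :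
    conductance a b l = (1 + t * (l - l₀)) / moment a b 0 l₀ := by
  have hc : ∀ e, a e + b e * l = (a e + b e * l₀) * (1 + t * (l - l₀)) := fun e => by
    linear_combination (l - l₀) * h e
  simp only [conductance_eq_inv_moment_zero, moment, hc, mul_pow, ← div_div, ← Finset.sum_div]
  simp

end AffineSeries

theorem stmt_5 (k : ℕ) (c : Fin k → ℝ → ℝ) (a b : Fin k → ℝ)
    (haffine : ∀ e, ∀ l : ℝ, c e l = a e + b e * l)
    (hpos : ∀ e, ∀ l ∈ Icc (0 : ℝ) 1, 0 < c e l)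
    (lbar : ℝ) (hlbar : lbar ∈ Ioo (0 : ℝ) 1)
    (hsecond : deriv (deriv (fun l => 1 / (∑ e, 1 / c e l))) lbar = 0) :
    ∃ A B : ℝ, ∀ l ∈ Ioo (0 : ℝ) 1, 1 / (∑ e, 1 / c e l) = A + B * l := by
  obtain rfl : c = fun e l => a e + b e * l := funext₂ haffine
  rcases isEmpty_or_nonempty (Fin k) with _ | _
  · exact ⟨0, 0, fun l _ => by simp⟩
  change deriv (deriv (AffineSeries.conductance a b)) lbar = 0 at hsecond
  have hnear : ∀ᶠ x in 𝓝 lbar, ∀ e, 0 < a e + b e * x :=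
    eventually_of_mem (Ioo_mem_nhds hlbar.1 hlbar.2) fun x hx e =>
      hpos e x (Ioo_subset_Icc_self hx)
  have h0 := (AffineSeries.moment_zero_pos a b hnear.self_of_nhds).ne'
  rw [AffineSeries.deriv_deriv_conductance a b hnear, div_eq_zero_iff, mul_eq_zero,
    sub_eq_zero] at hsecond
  have hvar : AffineSeries.moment a b 1 lbar ^ 2
      = AffineSeries.moment a b 0 lbar * AffineSeries.moment a b 2 lbar := by
    simpa [h0] using hsecond
  obtain ⟨t, ht⟩ := AffineSeries.exists_eq_mul_of_sq_moment_one_eq a b hnear.self_of_nhds hvar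
  set M := AffineSeries.moment a b 0 lbar
  refine ⟨(1 - t * lbar) / M, t / M, fun l _ => ?_⟩
  show AffineSeries.conductance a b l = _
  rw [AffineSeries.conductance_eq_of_forall_eq_mul a b ht]
  ring
end

section
/- Let P be a finite set of parallel paths with conductances c_p(β) > 0 strictly increasing in β_p, lengths b_p ≥ 0, demand d > 0, and equilibrium delay L(β) = (d + Σ_p c_p(β_p) b_p)/(Σ_p c_p(β_p)). If β'' ≥ β' componentwise with strict inequality in some component, and L(β') > max_p b_p, then L(β'') < L(β'). -/
/-! Raising the conductances moves extra weight onto paths whose lengths are all below the current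
delay `L(β')`, so the new delay is a mediant of `L(β')` with a strictly smaller ratio. -/

open Finset

lemma add_div_add_lt_div {A B C D : ℝ} (hB : 0 < B) (hD : 0 < D) (h : C / D < A / B) :
    (A + C) / (B + D) < A / B := by
  rw [div_lt_div_iff₀ hD hB] at h
  rw [div_lt_div_iff₀ (add_pos hB hD) hB]
  nlinarith

lemma sum_mul_lt_mul_sum {ι : Type*} [Fintype ι] {δ b : ι → ℝ} {ℓ : ℝ}
    (hδ : ∀ p, 0 ≤ δ p) (hpos : ∃ q, 0 < δ q) (hb : ∀ p, b p < ℓ) :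
    ∑ p, δ p * b p < ℓ * ∑ p, δ p := by
  rw [mul_sum]
  obtain ⟨q, hq⟩ := hpos
  refine sum_lt_sum (fun p _ => ?_) ⟨q, mem_univ q, ?_⟩
  · rw [mul_comm ℓ]
    exact mul_le_mul_of_nonneg_left (hb p).le (hδ p)
  · rw [mul_comm ℓ]
    exact mul_lt_mul_of_pos_left (hb q) hq

lemma div_sum_lt_div_sum_of_le {ι : Type*} [Fintype ι] {w w' b : ι → ℝ} (d : ℝ)
    (hw : 0 < ∑ p, w p) (hle : ∀ p, w p ≤ w' p) (hlt : ∃ q, w q < w' q)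
    (hb : ∀ p, b p < (d + ∑ p, w p * b p) / ∑ p, w p) :
    (d + ∑ p, w' p * b p) / ∑ p, w' p < (d + ∑ p, w p * b p) / ∑ p, w p := by
  set δ := fun p => w' p - w p
  have hδ : ∀ p, 0 ≤ δ p := fun p => sub_nonneg.mpr (hle p)
  have hδpos : ∃ q, 0 < δ q := hlt.imp fun q hq => sub_pos.mpr hq
  have hD : 0 < ∑ p, δ p := by
    obtain ⟨q, hq⟩ := hδpos
    exact sum_pos' (fun p _ => hδ p) ⟨q, mem_univ q, hq⟩
  have hnum : d + ∑ p, w' p * b p = (d + ∑ p, w p * b p) + ∑ p, δ p * b p := by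
    simp only [δ, sub_mul, sum_sub_distrib]; ring
  have hden : ∑ p, w' p = ∑ p, w p + ∑ p, δ p := by
    simp only [δ, sum_sub_distrib]; ring
  rw [hnum, hden]
  refine add_div_add_lt_div hw hD ?_
  rw [div_lt_iff₀ hD]
  exact sum_mul_lt_mul_sum hδ hδpos hb

theorem stmt_7_general {P : Type*} [Fintype P] [Nonempty P]
    (c : P → ℝ → ℝ) (b : P → ℝ) (d : ℝ)
    (hcpos : ∀ p t, 0 < c p t) (hcmono : ∀ p, StrictMono (c p))
    (L : (P → ℝ) → ℝ)
    (hL : ∀ β : P → ℝ, L β = (d + ∑ p, c p (β p) * b p) / (∑ p, c p (β p)))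
    (β' β'' : P → ℝ)
    (hge : ∀ p, β' p ≤ β'' p) (hstrict : ∃ p, β' p < β'' p)
    (hused : ∀ p, b p < L β') :
    L β'' < L β' := by
  simp only [hL] at hused ⊢
  exact div_sum_lt_div_sum_of_le d (sum_pos (fun p _ => hcpos p (β' p)) univ_nonempty)
    (fun p => (hcmono p).monotone (hge p)) (hstrict.imp fun p hp => hcmono p hp) hused

theorem stmt_7 {P : Type*} [Fintype P] [Nonempty P]
    (c : P → ℝ → ℝ) (b : P → ℝ) (d : ℝ)
    (hcpos : ∀ p t, 0 < c p t) (hcmono : ∀ p, StrictMono (c p))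
    (hb : ∀ p, 0 ≤ b p) (hd : 0 < d)
    (L : (P → ℝ) → ℝ)
    (hL : ∀ β : P → ℝ, L β = (d + ∑ p, c p (β p) * b p) / (∑ p, c p (β p)))
    (β' β'' : P → ℝ) (h0' : ∀ p, 0 ≤ β' p) (h0'' : ∀ p, 0 ≤ β'' p)
    (hge : ∀ p, β' p ≤ β'' p) (hstrict : ∃ p, β' p < β'' p)
    (hused : ∀ p, b p < L β') :
    L β'' < L β' :=
  stmt_7_general c b d hcpos hcmono L hL β' β'' hge hstrict hused
end

section
/- In a network of parallel edges E between s and t, with delay on edge e given by x/c_e(β_e) + b_e where c_e(β) = c_e + μ_e β_e, suppose all edges carry positive flow at equilibrium so that L(β) = (d + Σ_e c_e(β) b_e)/(Σ_e c_e(β)). If edges e, e' satisfy ∂L/∂β_e = ∂L/∂β_{e'} at β (with μ_e ≠ μ_{e'}), then L(β) = (b_e μ_e − b_{e'} μ_{e'})/(μ_e − μ_{e'}), and for any δ ∈ ℝ, the allocation β' obtained by increasing β_e by δ and decreasing β_{e'} by δ (keeping denominators positive) satisfies L(β') = L(β). -/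
/-!
Clearing the common factor `-1/Σ_r c_r(β)` from the equality of the two partial derivatives gives
`μ_e (L - b_e) = μ_{e'} (L - b_{e'})`, which is linear in `L` and determines it. Moving `δ` of budget
from `e'` to `e` changes the denominator of `L` by `δ (μ_e - μ_{e'})` and its numerator by
`δ (μ_e b_e - μ_{e'} b_{e'}) = δ L (μ_e - μ_{e'})`, and such a proportional change leaves the quotient
equal to `L`.
-/

open Finset Function

lemma eq_div_of_neg_div_mul_sub_eq {S a a' x x' L : ℝ} (hS : S ≠ 0) (ha : a ≠ a')
    (h : -(a / S) * (L - x) = -(a' / S) * (L - x')) :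
    L = (x * a - x' * a') / (a - a') := by
  rw [eq_div_iff (sub_ne_zero.mpr ha)]
  field_simp at h
  linarith

lemma add_div_add_eq_of_eq_div {p q u v L : ℝ} (hq : q ≠ 0) (hqv : q + v ≠ 0)
    (hL : L = p / q) (hu : u = L * v) : (p + u) / (q + v) = L := by
  rw [div_eq_iff hqv, hu, hL]
  field_simp

lemma update_update_eq_add_single_sub_single {E G : Type*} [DecidableEq E] [AddCommGroup G]
    (β : E → G) {e e' : E} (hee' : e ≠ e') (δ : G) :
    update (update β e (β e + δ)) e' (β e' - δ) = β + Pi.single e δ - Pi.single e' δ := by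
  ext r
  rcases eq_or_ne r e' with rfl | hr'
  · simp [hee'.symm]
  rcases eq_or_ne r e with rfl | hr
  · simp [hee']
  · simp [hr, hr']

lemma sum_affine_mul_add_single_sub_single {E : Type*} [Fintype E] [DecidableEq E]
    (c μ w β : E → ℝ) (e e' : E) (δ : ℝ) :
    ∑ r, (c r + μ r * (β + Pi.single e δ - Pi.single e' δ : E → ℝ) r) * w r
      = ∑ r, (c r + μ r * β r) * w r + δ * (μ e * w e - μ e' * w e') := by
  simp only [Pi.add_apply, Pi.sub_apply, mul_add, mul_sub, add_mul, sub_mul, sum_add_distrib,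
    sum_sub_distrib, Pi.single_apply, mul_ite, ite_mul, mul_zero, zero_mul, sum_ite_eq', mem_univ, ite_true]
  ring

theorem stmt_8_general {E : Type*} [Fintype E] [DecidableEq E]
    (c μ b : E → ℝ) (d : ℝ)
    (L : (E → ℝ) → ℝ)
    (hL : ∀ β : E → ℝ,
      L β = (d + ∑ r, (c r + μ r * β r) * b r) / (∑ r, (c r + μ r * β r)))
    (β : E → ℝ) (e e' : E) (hee' : e ≠ e') (hμne : μ e ≠ μ e')
    (hposedge : ∀ r, 0 < c r + μ r * β r)
    (hderiv : -(μ e / (∑ r, (c r + μ r * β r))) * (L β - b e)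
            = -(μ e' / (∑ r, (c r + μ r * β r))) * (L β - b e'))
    (δ : ℝ)
    (β' : E → ℝ)
    (hβ' : β' = Function.update (Function.update β e (β e + δ)) e' (β e' - δ))
    (hposden : 0 < ∑ r, (c r + μ r * β' r)) :
    L β = (b e * μ e - b e' * μ e') / (μ e - μ e') ∧ L β' = L β := by
  have hS : ∑ r, (c r + μ r * β r) ≠ 0 := (sum_pos (fun r _ => hposedge r) ⟨e, mem_univ e⟩).ne'
  have hLβ := eq_div_of_neg_div_mul_sub_eq hS hμne hderiv
  refine ⟨hLβ, ?_⟩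
  rw [update_update_eq_add_single_sub_single β hee'] at hβ'
  subst hβ'
  have hden := sum_affine_mul_add_single_sub_single c μ 1 β e e' δ
  simp only [Pi.one_apply, mul_one] at hden
  rw [hden] at hposden
  rw [hL, hden, sum_affine_mul_add_single_sub_single, ← add_assoc]
  refine add_div_add_eq_of_eq_div hS hposden.ne' (hL β) ?_
  rw [hLβ]
  field_simp [sub_ne_zero.mpr hμne]

theorem stmt_8 {E : Type*} [Fintype E] [DecidableEq E]
    (c μ b : E → ℝ) (d : ℝ) (hd : 0 < d) (hb : ∀ r, 0 ≤ b r)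
    (L : (E → ℝ) → ℝ)
    (hL : ∀ β : E → ℝ,
      L β = (d + ∑ r, (c r + μ r * β r) * b r) / (∑ r, (c r + μ r * β r)))
    (β : E → ℝ) (e e' : E) (hee' : e ≠ e') (hμne : μ e ≠ μ e')
    (hposedge : ∀ r, 0 < c r + μ r * β r)
    (hderiv : -(μ e / (∑ r, (c r + μ r * β r))) * (L β - b e)
            = -(μ e' / (∑ r, (c r + μ r * β r))) * (L β - b e'))
    (δ : ℝ)
    (β' : E → ℝ)
    (hβ' : β' = Function.update (Function.update β e (β e + δ)) e' (β e' - δ))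
    (hposden : 0 < ∑ r, (c r + μ r * β' r)) :
    L β = (b e * μ e - b e' * μ e') / (μ e - μ e') ∧ L β' = L β :=
  stmt_8_general c μ b d L hL β e e' hee' hμne hposedge hderiv δ β' hβ' hposden
end

section
/- Define C₁(x) = (d + b₁(c₁ + x/μ₁))/(c₁ + c₂ + x/μ₁) for x ≥ 0 with parameters δ = 19/31, λ = 4√2 − 1, c₁ = δ/v, c₂ = (1−δ)/v, μ₁ = λv², b₁ = (λ+2)v, d = 2(λ+2), where v > 0. Then C₁(x) + x ≥ 2v(5√2 + 1) for all x ≥ 0, with equality if and only if x = v(√2 + 1). -/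
/-! With `y = λv + x`, the delay simplifies to `C₁(x) = (λ+2)v + (λ+2)(1+δ)λv² / y`, and for the
chosen `δ, λ` the constant is `(λ+2)(1+δ)λ = 31 · 50/31 = 50`. Hence
`C₁(x) + x = 2v + y + (5√2 v)² / y`, and AM-GM `y + r²/y ≥ 2r` (equality iff `y = r`) gives the
minimum `2v + 10√2 v`, attained at `y = 5√2 v`, i.e. `x = (√2 + 1)v`. -/

lemma add_sq_div_eq_two_mul_add {y : ℝ} (hy : y ≠ 0) (r : ℝ) :
    y + r ^ 2 / y = 2 * r + (y - r) ^ 2 / y := by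
  field_simp
  ring

lemma two_mul_le_add_sq_div {y : ℝ} (hy : 0 < y) (r : ℝ) : 2 * r ≤ y + r ^ 2 / y := by
  rw [add_sq_div_eq_two_mul_add hy.ne']
  linarith [div_nonneg (sq_nonneg (y - r)) hy.le]

lemma add_sq_div_eq_two_mul_iff {y : ℝ} (hy : 0 < y) (r : ℝ) :
    y + r ^ 2 / y = 2 * r ↔ y = r := by
  rw [add_sq_div_eq_two_mul_add hy.ne', add_eq_left, div_eq_zero_iff, sq_eq_zero_iff,
    sub_eq_zero, or_iff_left hy.ne']

lemma dipole_delay_eq {v δ lam x : ℝ} (hv : v ≠ 0) (hlam : lam ≠ 0) (hy : lam * v + x ≠ 0) :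
    (2 * (lam + 2) + (lam + 2) * v * (δ / v + x / (lam * v ^ 2))) /
        (δ / v + (1 - δ) / v + x / (lam * v ^ 2)) =
      (lam + 2) * v + (lam + 2) * (1 + δ) * lam * v ^ 2 / (lam * v + x) := by
  have hden : δ / v + (1 - δ) / v + x / (lam * v ^ 2) = (lam * v + x) / (lam * v ^ 2) := by
    field_simp
    ring
  rw [hden, div_div_eq_mul_div, add_div' _ _ _ hy, div_left_inj' hy]
  field_simp
  ring

theorem stmt_9 (v : ℝ) (hv : 0 < v)
    (δ lam c₁ c₂ μ₁ b₁ d : ℝ)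
    (hδ : δ = 19 / 31) (hlam : lam = 4 * Real.sqrt 2 - 1)
    (hc₁ : c₁ = δ / v) (hc₂ : c₂ = (1 - δ) / v) (hμ₁ : μ₁ = lam * v ^ 2)
    (hb₁ : b₁ = (lam + 2) * v) (hd : d = 2 * (lam + 2))
    (C₁ : ℝ → ℝ)
    (hC₁ : ∀ x, C₁ x = (d + b₁ * (c₁ + x / μ₁)) / (c₁ + c₂ + x / μ₁)) :
    ∀ x : ℝ, 0 ≤ x →
      C₁ x + x ≥ 2 * v * (5 * Real.sqrt 2 + 1) ∧
      (C₁ x + x = 2 * v * (5 * Real.sqrt 2 + 1) ↔ x = v * (Real.sqrt 2 + 1)) := by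
  intro x hx
  subst hδ hlam hc₁ hc₂ hμ₁ hb₁ hd
  have hs : Real.sqrt 2 ^ 2 = 2 := Real.sq_sqrt zero_le_two
  have hlam_pos : 0 < 4 * Real.sqrt 2 - 1 := by nlinarith [Real.sqrt_nonneg 2]
  set y := (4 * Real.sqrt 2 - 1) * v + x with hy_def
  have hy : 0 < y := by positivity
  have hconst : (4 * Real.sqrt 2 - 1 + 2) * (1 + 19 / 31) * (4 * Real.sqrt 2 - 1) * v ^ 2 =
      (5 * Real.sqrt 2 * v) ^ 2 := by
    linear_combination 25 / 31 * v ^ 2 * hs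
  have key : C₁ x + x = 2 * v + (y + (5 * Real.sqrt 2 * v) ^ 2 / y) := by
    rw [hC₁, dipole_delay_eq hv.ne' hlam_pos.ne' hy.ne', hconst]
    ring
  rw [key]
  refine ⟨by linarith [two_mul_le_add_sq_div hy (5 * Real.sqrt 2 * v)], ?_⟩
  rw [show 2 * v * (5 * Real.sqrt 2 + 1) = 2 * v + 2 * (5 * Real.sqrt 2 * v) by ring,
    add_right_inj, add_sq_div_eq_two_mul_iff hy, hy_def]
  constructor <;> intro h <;> linarith
end

section
/- Define C₃(x) = d/(c₂ + x/μ₂) for x ≥ 0 with parameters δ = 19/31, λ = 4√2 − 1, c₂ = (1−δ)/v, μ₂ = 2λv², d = 2(λ+2), v > 0. Then C₃(x) + x > 2v(5√2 + 1) for all x ≥ 0. -/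
theorem stmt_11 (v : ℝ) (hv : 0 < v)
    (δ lam c₂ μ₂ d : ℝ)
    (hδ : δ = 19 / 31) (hlam : lam = 4 * Real.sqrt 2 - 1)
    (hc₂ : c₂ = (1 - δ) / v) (hμ₂ : μ₂ = 2 * lam * v ^ 2)
    (hd : d = 2 * (lam + 2))
    (C₃ : ℝ → ℝ) (hC₃ : ∀ x, C₃ x = d / (c₂ + x / μ₂)) :
    ∀ x : ℝ, 0 ≤ x → C₃ x + x > 2 * v * (5 * Real.sqrt 2 + 1) := by
  intro x hx
  have hs : Real.sqrt 2 ^ 2 = 2 := Real.sq_sqrt (by norm_num)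
  have hs0 : (0:ℝ) ≤ Real.sqrt 2 := Real.sqrt_nonneg 2
  set s := Real.sqrt 2 with hsdef
  have hs1 : s < 3/2 := by nlinarith
  have hs2 : 1.4 < s := by nlinarith
  have hlampos : 0 < lam := by rw [hlam]; nlinarith
  have hμ : 0 < μ₂ := by rw [hμ₂]; positivity
  have hc : 0 < c₂ := by rw [hc₂, hδ]; positivity
  have ht : 0 < c₂ + x / μ₂ := by positivity
  rw [hC₃ x]
  have key : (2 * v * (5 * s + 1) - x) * (c₂ + x / μ₂) < d := by
    subst hd hμ₂ hc₂ hδ hlam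
    rw [div_add_div _ _ hv.ne' hμ.ne', ← mul_div_assoc, div_lt_iff₀ (by positivity)]
    nlinarith [sq_nonneg (31 * x + 12 * (4*s-1) * v - 31 * v * (5*s+1)),
      mul_nonneg (mul_nonneg (sq_nonneg (31 * x + 12 * (4*s-1) * v - 31 * v * (5*s+1))) hv.le) hv.le,
      mul_nonneg (sq_nonneg (31 * x + 12 * (4*s-1) * v - 31 * v * (5*s+1))) hv.le,
      mul_pos hv hv, mul_pos (mul_pos hv hv) hv, mul_pos (mul_pos (mul_pos hv hv) hv) hv,
      mul_nonneg hx hv.le, mul_nonneg (mul_nonneg hx hv.le) hv.le]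
  have h2 : 2 * v * (5 * s + 1) - x < d / (c₂ + x / μ₂) := (lt_div_iff₀ ht).mpr key
  linarith
end

section
/- Let L_i : ℝ_{≥0} → ℝ satisfy L_i(x) ≥ L_i(α_i) + α_i − x for all x ≥ 0, with equality iff x = α_i or x = α_i + v_i, for i = 1,…,n, where v_i > 0 and Σ_i v_i = 2V. Let B = V + Σ_i α_i. Then there exists a valid allocation β (β_i ≥ 0, Σ_i β_i ≤ B) with Σ_i L_i(β_i) = Σ_i L_i(α_i) − V if and only if there is a subset S ⊆ {1,…,n} with Σ_{i∈S} v_i = V. -/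
theorem stmt_12 (n : ℕ) (L : Fin n → ℝ → ℝ) (α v : Fin n → ℝ) (V B : ℝ)
    (hα : ∀ i, 0 ≤ α i) (hv : ∀ i, 0 < v i) (hV : ∑ i, v i = 2 * V)
    (hgadget : ∀ i, ∀ x : ℝ, 0 ≤ x →
      L i x ≥ L i (α i) + α i - x ∧
      (L i x = L i (α i) + α i - x ↔ x = α i ∨ x = α i + v i))
    (hB : B = V + ∑ i, α i) :
    (∃ β : Fin n → ℝ, (∀ i, 0 ≤ β i) ∧ (∑ i, β i) ≤ B ∧
        ∑ i, L i (β i) = (∑ i, L i (α i)) - V) ↔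
    ∃ S : Finset (Fin n), ∑ i ∈ S, v i = V := by
  classical
  constructor
  · rintro ⟨β, hβ0, hβB, hβL⟩
    have hterm : ∀ i, 0 ≤ L i (β i) - (L i (α i) + α i - β i) := fun i => by
      have := (hgadget i (β i) (hβ0 i)).1; linarith
    have h2 : ∑ i, (L i (β i) - (L i (α i) + α i - β i))
        = ∑ i, L i (β i) - (∑ i, L i (α i) + ∑ i, α i - ∑ i, β i) := by
      rw [Finset.sum_sub_distrib, Finset.sum_sub_distrib, Finset.sum_add_distrib]
    have hsum_ge : 0 ≤ ∑ i, (L i (β i) - (L i (α i) + α i - β i)) :=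
      Finset.sum_nonneg fun i _ => hterm i
    have hβeq : ∑ i, β i = B := by
      apply le_antisymm hβB
      rw [h2] at hsum_ge; linarith
    have hzero : ∑ i, (L i (β i) - (L i (α i) + α i - β i)) = 0 := by
      rw [h2]; linarith
    have hz := (Finset.sum_eq_zero_iff_of_nonneg (fun i _ => hterm i)).1 hzero
    have hchoice : ∀ i, β i = α i ∨ β i = α i + v i := fun i => by
      have h := hz i (Finset.mem_univ i)
      exact ((hgadget i (β i) (hβ0 i)).2).1 (by linarith)
    refine ⟨Finset.univ.filter (fun i => β i = α i + v i), ?_⟩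
    have key : ∀ i, β i - α i = if β i = α i + v i then v i else 0 := fun i => by
      rcases hchoice i with h | h
      · rw [if_neg]
        · rw [h]; ring
        · rw [h]; intro hc; have := hv i; linarith
      · rw [if_pos h, h]; ring
    have hsum : ∑ i, (β i - α i) = ∑ i ∈ Finset.univ.filter (fun i => β i = α i + v i), v i := by
      rw [Finset.sum_filter]
      exact Finset.sum_congr rfl fun i _ => key i
    rw [← hsum, Finset.sum_sub_distrib, hβeq, hB]; ring
  · rintro ⟨S, hS⟩
    refine ⟨fun i => if i ∈ S then α i + v i else α i, fun i => ?_, ?_, ?_⟩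
    · dsimp only
      split
      · exact add_nonneg (hα i) (hv i).le
      · exact hα i
    · have : ∑ i, (if i ∈ S then α i + v i else α i)
          = ∑ i, α i + ∑ i ∈ S, v i := by
        have : ∀ i, (if i ∈ S then α i + v i else α i) = α i + (if i ∈ S then v i else 0) :=
          fun i => by split <;> ring
        simp_rw [this, Finset.sum_add_distrib, ← Finset.sum_filter,
          Finset.filter_mem_eq_inter, Finset.univ_inter]
      rw [this, hS, hB]; linarith
    · have heach : ∀ i, L i (if i ∈ S then α i + v i else α i)
          = L i (α i) + α i - (if i ∈ S then α i + v i else α i) := fun i => by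
        by_cases h : i ∈ S
        · simp only [if_pos h]
          exact ((hgadget i (α i + v i) (by have := hv i; have := hα i; linarith)).2).2 (Or.inr rfl)
        · simp only [if_neg h]
          exact ((hgadget i (α i) (hα i)).2).2 (Or.inl rfl)
      simp_rw [heach]
      have : ∀ i, L i (α i) + α i - (if i ∈ S then α i + v i else α i)
          = L i (α i) - (if i ∈ S then v i else 0) := fun i => by split <;> ring
      simp_rw [this, Finset.sum_sub_distrib, ← Finset.sum_filter,
        Finset.filter_mem_eq_inter, Finset.univ_inter, hS]
end

section
/- Let G be a directed two-terminal series-parallel graph with source s and sink t, and let f, g be s–t flows with |g| ≥ |f| and |g| > 0. Then there exists an s–t path p such that for every edge e on p, g_e > 0 and g_e ≥ f_e. -/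
/-- Two-terminal series-parallel graphs, built from single edges by
series and parallel composition. -/
inductive SPG : Type where
  | edge : SPG
  | series : SPG → SPG → SPG
  | parallel : SPG → SPG → SPG

namespace SPG

/-- The edges of a series-parallel graph. -/
def E : SPG → Type
  | .edge => Unit
  | .series G₁ G₂ => G₁.E ⊕ G₂.E
  | .parallel G₁ G₂ => G₁.E ⊕ G₂.E

/-- The s-t paths of a series-parallel graph. -/
def Path : SPG → Type
  | .edge => Unit
  | .series G₁ G₂ => G₁.Path × G₂.Path
  | .parallel G₁ G₂ => G₁.Path ⊕ G₂.Path

/-- Whether an edge lies on a path. -/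
def onPath : (G : SPG) → G.Path → G.E → Prop
  | .edge, _, _ => True
  | .series _ _, p, .inl e => onPath _ p.1 e
  | .series _ _, p, .inr e => onPath _ p.2 e
  | .parallel _ _, .inl p, .inl e => onPath _ p e
  | .parallel _ _, .inl _, .inr _ => False
  | .parallel _ _, .inr _, .inl _ => False
  | .parallel _ _, .inr p, .inr e => onPath _ p e

/-- `IsFlow G f d`: `f` is a (nonnegative) s-t flow of value `d` on `G`. -/
def IsFlow : (G : SPG) → (G.E → ℝ) → ℝ → Prop
  | .edge, f, d => f () = d ∧ 0 ≤ d
  | .series G₁ G₂, f, d => IsFlow G₁ (f ∘ Sum.inl) d ∧ IsFlow G₂ (f ∘ Sum.inr) d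
  | .parallel G₁ G₂, f, d => ∃ d₁ d₂ : ℝ, d₁ + d₂ = d ∧
      IsFlow G₁ (f ∘ Sum.inl) d₁ ∧ IsFlow G₂ (f ∘ Sum.inr) d₂

end SPG

lemma flow_nonneg : ∀ (G : SPG) (f : G.E → ℝ) (d : ℝ), G.IsFlow f d → 0 ≤ d
  | .edge, f, d, h => h.2
  | .series G₁ G₂, f, d, h => flow_nonneg G₁ _ d h.1
  | .parallel G₁ G₂, f, d, ⟨d₁, d₂, hsum, h₁, h₂⟩ =>
    hsum ▸ add_nonneg (flow_nonneg G₁ _ _ h₁) (flow_nonneg G₂ _ _ h₂)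


lemma main_13 : ∀ (G : SPG) (f g : G.E → ℝ) (df dg : ℝ),
    G.IsFlow f df → G.IsFlow g dg → df ≤ dg → 0 < dg →
    ∃ p : G.Path, ∀ e : G.E, G.onPath p e → 0 < g e ∧ f e ≤ g e
  | .edge, f, g, df, dg, hf, hg, hge, hgpos =>
    ⟨(), fun e _ => ⟨hg.1 ▸ hgpos, by
      have : e = () := rfl
      rw [this, hf.1, hg.1]; exact hge⟩⟩
  | .series G₁ G₂, f, g, df, dg, hf, hg, hge, hgpos => by
    obtain ⟨p₁, h₁⟩ := main_13 G₁ _ _ _ _ hf.1 hg.1 hge hgpos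
    obtain ⟨p₂, h₂⟩ := main_13 G₂ _ _ _ _ hf.2 hg.2 hge hgpos
    exact ⟨(p₁, p₂), fun e he => by cases e with
      | inl e => exact h₁ e he
      | inr e => exact h₂ e he⟩
  | .parallel G₁ G₂, f, g, df, dg, hf, hg, hge, hgpos => by
    obtain ⟨d₁, d₂, hd, hf₁, hf₂⟩ := hf
    obtain ⟨e₁, e₂, he, hg₁, hg₂⟩ := hg
    have hd₁ := flow_nonneg _ _ _ hf₁
    have hd₂ := flow_nonneg _ _ _ hf₂
    have he₁ := flow_nonneg _ _ _ hg₁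
    have he₂ := flow_nonneg _ _ _ hg₂
    by_cases hc : d₁ ≤ e₁ ∧ 0 < e₁
    · obtain ⟨p, hp⟩ := main_13 G₁ _ _ _ _ hf₁ hg₁ hc.1 hc.2
      exact ⟨Sum.inl p, fun e he => by cases e with
        | inl e => exact hp e he
        | inr e => exact absurd he not_false⟩
    · have hc2 : d₂ ≤ e₂ ∧ 0 < e₂ := by
        rcases not_and_or.mp hc with h | h
        · push_neg at h
          constructor <;> linarith
        · push_neg at h
          have : e₁ = 0 := le_antisymm h he₁
          constructor <;> linarith
      obtain ⟨p, hp⟩ := main_13 G₂ _ _ _ _ hf₂ hg₂ hc2.1 hc2.2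
      exact ⟨Sum.inr p, fun e he => by cases e with
        | inl e => exact absurd he not_false
        | inr e => exact hp e he⟩

theorem stmt_13 (G : SPG) (f g : G.E → ℝ) (df dg : ℝ)
    (hf : G.IsFlow f df) (hg : G.IsFlow g dg)
    (hge : df ≤ dg) (hgpos : 0 < dg) :
    ∃ p : G.Path, ∀ e : G.E, G.onPath p e → 0 < g e ∧ f e ≤ g e :=
  main_13 G f g df dg hf hg hge hgpos
end

section
/- Let f* be a flow on m edges admitting a path decomposition into at most m paths, with total value d > 0, and let λ > 0 with 1/λ ∈ ℕ and mdλ/ε ≤ max_p f*_p for some path in the decomposition. Then there exists a flow f̂ of value d such that f̂_e is an integer multiple of dλ on every edge, f̂_e ≤ (1+ε)f*_e on every edge, and f̂_e > 0 implies f*_e > 0. -/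
open Finset

theorem stmt_15 (m : ℕ) (A : Fin m → Finset (Fin m)) (fp : Fin m → ℝ)
    (hfp : ∀ j, 0 ≤ fp j) (d ε lam : ℝ) (hd : 0 < d)
    (hval : ∑ j, fp j = d) (hε : 0 < ε) (hlam : 0 < lam)
    (hint : ∃ N : ℕ, (N : ℝ) * lam = 1)
    (hbig : ∃ q : Fin m, (m : ℝ) * d * lam / ε ≤ fp q) :
    ∃ fhatp : Fin m → ℝ,
      (∀ j, 0 ≤ fhatp j) ∧
      (∀ j, 0 < fhatp j → 0 < fp j) ∧
      (∑ j, fhatp j = d) ∧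
      (∀ e : Fin m, ∃ k : ℕ,
        (∑ j ∈ univ.filter (fun j => e ∈ A j), fhatp j) = (k : ℝ) * (d * lam)) ∧
      (∀ e : Fin m,
        (∑ j ∈ univ.filter (fun j => e ∈ A j), fhatp j)
          ≤ (1 + ε) * ∑ j ∈ univ.filter (fun j => e ∈ A j), fp j) ∧
      (∀ e : Fin m,
        0 < (∑ j ∈ univ.filter (fun j => e ∈ A j), fhatp j) →
          0 < ∑ j ∈ univ.filter (fun j => e ∈ A j), fp j) := by
  obtain ⟨N, hN⟩ := hint
  obtain ⟨q, hq⟩ := hbig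
  set c : ℝ := d * lam with hc
  have hc0 : 0 < c := mul_pos hd hlam
  have hdNc : d = (N : ℝ) * c := by
    have : d * ((N:ℝ) * lam) = d * 1 := by rw [hN]
    calc d = d * ((N:ℝ) * lam) := by rw [hN]; ring
    _ = (N:ℝ) * c := by rw [hc]; ring
  set r : Fin m → ℝ := fun j => c * ⌊fp j / c⌋ with hr
  have hr_le : ∀ j, r j ≤ fp j := by
    intro j
    have h1 := Int.floor_le (fp j / c)
    have : c * ⌊fp j / c⌋ ≤ c * (fp j / c) := by
      exact mul_le_mul_of_nonneg_left h1 hc0.le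
    simpa [hr, mul_div_cancel₀ _ hc0.ne'] using this
  have hfl_nonneg : ∀ j, (0:ℤ) ≤ ⌊fp j / c⌋ := fun j =>
    Int.floor_nonneg.mpr (div_nonneg (hfp j) hc0.le)
  have hr_nonneg : ∀ j, 0 ≤ r j := by
    intro j
    have : (0:ℝ) ≤ ⌊fp j / c⌋ := by exact_mod_cast hfl_nonneg j
    exact mul_nonneg hc0.le this
  have hgap : ∀ j, fp j - r j ≤ c := by
    intro j
    have h1 := Int.lt_floor_add_one (fp j / c)
    have : fp j / c ≤ ⌊fp j / c⌋ + 1 := h1.le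
    have h2 : fp j ≤ c * (⌊fp j / c⌋ + 1) := by
      rw [mul_comm, ← div_le_iff₀ hc0]; exact this
    simp only [hr]; nlinarith
  set fh : Fin m → ℝ := fun j => if j = q then d - ∑ i ∈ univ.erase q, r i else r j with hfh
  have hsum_split : d = fp q + ∑ i ∈ univ.erase q, fp i := by
    rw [← hval]; exact (Finset.add_sum_erase univ fp (mem_univ q)).symm
  have hfhq : fh q = fp q + ∑ i ∈ univ.erase q, (fp i - r i) := by
    simp only [hfh, if_pos rfl, Finset.sum_sub_distrib]
    rw [hsum_split]; ring
  have hexcess : ∑ i ∈ univ.erase q, (fp i - r i) ≤ ε * fp q := by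
    have h1 : ∑ i ∈ univ.erase q, (fp i - r i) ≤ ∑ _i ∈ univ.erase q, c :=
      Finset.sum_le_sum fun i _ => hgap i
    have h2 : ∑ _i ∈ univ.erase q, c = ((univ.erase q).card : ℝ) * c := by
      simp [Finset.sum_const, nsmul_eq_mul]
    have h3 : ((univ.erase q).card : ℝ) ≤ (m : ℝ) := by
      have := Finset.card_erase_le (a := q) (s := (univ : Finset (Fin m)))
      have h4 : (univ : Finset (Fin m)).card = m := Finset.card_univ.trans (Fintype.card_fin m)
      exact_mod_cast le_trans this (le_of_eq h4)
    have h5 : (m:ℝ) * d * lam ≤ ε * fp q := by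
      rw [div_le_iff₀ hε] at hq; linarith
    have h6 : ((univ.erase q).card : ℝ) * c ≤ (m:ℝ) * c :=
      mul_le_mul_of_nonneg_right h3 hc0.le
    calc ∑ i ∈ univ.erase q, (fp i - r i) ≤ ((univ.erase q).card : ℝ) * c := by
          rw [← h2]; exact h1
      _ ≤ (m:ℝ) * c := h6
      _ = (m:ℝ) * d * lam := by rw [hc]; ring
      _ ≤ ε * fp q := h5
  have hexcess0 : 0 ≤ ∑ i ∈ univ.erase q, (fp i - r i) :=
    Finset.sum_nonneg fun i _ => by linarith [hr_le i]
  -- basic facts about fh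
  have hfh_nonneg : ∀ j, 0 ≤ fh j := by
    intro j
    by_cases h : j = q
    · rw [h, hfhq]; have := hfp q; linarith
    · simp only [hfh, if_neg h]; exact hr_nonneg j
  have hfh_pos : ∀ j, 0 < fh j → 0 < fp j := by
    intro j hj
    by_cases h : j = q
    · rw [h]
      have hm : 0 < (m:ℝ) := by exact_mod_cast q.pos
      have : 0 < (m:ℝ) * d * lam / ε := by positivity
      linarith
    · simp only [hfh, if_neg h] at hj
      exact lt_of_lt_of_le hj (hr_le j)
  have hfh_sum : ∑ j, fh j = d := by
    rw [← Finset.add_sum_erase univ fh (mem_univ q)]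
    have : ∑ i ∈ univ.erase q, fh i = ∑ i ∈ univ.erase q, r i := by
      apply Finset.sum_congr rfl
      intro i hi
      have : i ≠ q := Finset.ne_of_mem_erase hi
      simp [hfh, this]
    rw [this]
    simp [hfh]
  -- fh j is an integer multiple of c
  set k : Fin m → ℤ := fun j =>
    if j = q then (N : ℤ) - ∑ i ∈ univ.erase q, ⌊fp i / c⌋ else ⌊fp j / c⌋ with hk
  have hfh_eq : ∀ j, fh j = (k j : ℝ) * c := by
    intro j
    by_cases h : j = q
    · rw [h]
      simp only [hfh, hk, if_pos rfl]
      push_cast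
      have hre : ∑ i ∈ univ.erase q, r i = ∑ i ∈ univ.erase q, (⌊fp i / c⌋ : ℝ) * c :=
        Finset.sum_congr rfl fun i _ => mul_comm _ _
      rw [hdNc, hre, sub_mul, Finset.sum_mul]
    · simp only [hfh, hk, if_neg h, hr, mul_comm]
  refine ⟨fh, hfh_nonneg, hfh_pos, hfh_sum, ?_, ?_, ?_⟩
  · intro e
    set S := univ.filter (fun j => e ∈ A j) with hS
    have hmul : ∑ j ∈ S, fh j = ((∑ j ∈ S, k j : ℤ) : ℝ) * c := by
      push_cast
      rw [Finset.sum_mul]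
      exact Finset.sum_congr rfl fun j _ => hfh_eq j
    have hnn : 0 ≤ ∑ j ∈ S, fh j := Finset.sum_nonneg fun j _ => hfh_nonneg j
    have hz : (0:ℤ) ≤ ∑ j ∈ S, k j := by
      by_contra h
      push_neg at h
      have : ((∑ j ∈ S, k j : ℤ) : ℝ) < 0 := by exact_mod_cast h
      nlinarith
    refine ⟨(∑ j ∈ S, k j).toNat, ?_⟩
    rw [hmul]
    congr 1
    exact_mod_cast (Int.toNat_of_nonneg hz).symm
  · intro e
    set S := univ.filter (fun j => e ∈ A j) with hS
    by_cases hqS : q ∈ S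
    · have hsplit1 : ∑ j ∈ S, fh j = fh q + ∑ j ∈ S.erase q, fh j :=
        (Finset.add_sum_erase S fh hqS).symm
      have hsplit2 : ∑ j ∈ S, fp j = fp q + ∑ j ∈ S.erase q, fp j :=
        (Finset.add_sum_erase S fp hqS).symm
      have h1 : ∑ j ∈ S.erase q, fh j ≤ ∑ j ∈ S.erase q, fp j := by
        apply Finset.sum_le_sum
        intro i hi
        have hne : i ≠ q := Finset.ne_of_mem_erase hi
        simp only [hfh, if_neg hne]
        exact hr_le i
      have h2 : fh q ≤ fp q + ε * fp q := by rw [hfhq]; linarith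
      have h3 : 0 ≤ ∑ j ∈ S.erase q, fp j := Finset.sum_nonneg fun j _ => hfp j
      rw [hsplit1, hsplit2]
      nlinarith
    · have h1 : ∑ j ∈ S, fh j ≤ ∑ j ∈ S, fp j := by
        apply Finset.sum_le_sum
        intro i hi
        have hne : i ≠ q := fun h => hqS (h ▸ hi)
        simp only [hfh, if_neg hne]
        exact hr_le i
      have h3 : 0 ≤ ∑ j ∈ S, fp j := Finset.sum_nonneg fun j _ => hfp j
      nlinarith
  · intro e hpos
    set S := univ.filter (fun j => e ∈ A j) with hS
    have : ∃ j ∈ S, 0 < fh j := by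
      by_contra h
      push_neg at h
      have : ∑ j ∈ S, fh j ≤ 0 := Finset.sum_nonpos h
      linarith
    obtain ⟨j, hjS, hj⟩ := this
    have hfpj : 0 < fp j := hfh_pos j hj
    have := Finset.single_le_sum (f := fp) (fun i _ => hfp i) hjS
    linarith
end

section
/- Suppose f̂_e ≤ (1+ε)f*_e and β̂_e ≥ (1−ε)β*_e for all edges e, with 0 < ε < 1, and edge delays l_e(x, β) = (x/(c_e + μ_e β))^{n_e} + b_e with 1 ≤ n_e ≤ ν, c_e > 0, μ_e, b_e ≥ 0. If every used path of f* has delay L* (i.e., f*_e > 0 on all edges of the path implies the path delay is L*), then for any path p with f̂_e > 0 on all e ∈ p, Σ_{e∈p} l_e(f̂_e, β̂_e) ≤ ((1+ε)/(1−ε))^ν · L*. -/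
theorem stmt_17 {E : Type*} [Fintype E] [DecidableEq E]
    (ε : ℝ) (hε : 0 < ε) (hε1 : ε < 1)
    (ν : ℕ) (n : E → ℕ) (hn1 : ∀ e, 1 ≤ n e) (hnν : ∀ e, n e ≤ ν)
    (c μ b : E → ℝ) (hc : ∀ e, 0 < c e) (hμ : ∀ e, 0 ≤ μ e) (hb : ∀ e, 0 ≤ b e)
    (fstar fhat βstar βhat : E → ℝ)
    (hfstar : ∀ e, 0 ≤ fstar e) (hfhat : ∀ e, 0 ≤ fhat e)
    (hβstar : ∀ e, 0 ≤ βstar e)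
    (hflow : ∀ e, fhat e ≤ (1 + ε) * fstar e)
    (hbudget : ∀ e, (1 - ε) * βstar e ≤ βhat e)
    (P : Set (Finset E)) (Lstar : ℝ)
    (hused : ∀ p ∈ P, (∀ e ∈ p, 0 < fstar e) →
      (∑ e ∈ p, ((fstar e / (c e + μ e * βstar e)) ^ n e + b e)) = Lstar) :
    ∀ p ∈ P, (∀ e ∈ p, 0 < fhat e) →
      (∑ e ∈ p, ((fhat e / (c e + μ e * βhat e)) ^ n e + b e))
        ≤ ((1 + ε) / (1 - ε)) ^ ν * Lstar := by
  intro p hp hpos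
  have h1ε : (0:ℝ) < 1 - ε := by linarith
  have hr1 : (1:ℝ) ≤ (1 + ε) / (1 - ε) := by
    rw [le_div_iff₀ h1ε]; linarith
  have hrν : (1:ℝ) ≤ ((1 + ε) / (1 - ε)) ^ ν := one_le_pow₀ hr1
  have hLs := hused p hp (fun e he => by nlinarith [hpos e he, hflow e, hfstar e])
  rw [← hLs, Finset.mul_sum]
  apply Finset.sum_le_sum
  intro e _
  have hce : 0 < c e + μ e * βstar e := by nlinarith [hc e, hμ e, hβstar e]
  have hden : (1 - ε) * (c e + μ e * βstar e) ≤ c e + μ e * βhat e := by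
    nlinarith [hμ e, hbudget e, hc e, hβstar e]
  have hdenpos : 0 < c e + μ e * βhat e :=
    lt_of_lt_of_le (by positivity) hden
  have hratio : fhat e / (c e + μ e * βhat e)
      ≤ ((1 + ε) / (1 - ε)) * (fstar e / (c e + μ e * βstar e)) := by
    have h1 : fhat e / (c e + μ e * βhat e)
        ≤ ((1 + ε) * fstar e) / ((1 - ε) * (c e + μ e * βstar e)) :=
      div_le_div₀ (by nlinarith [hfstar e]) (hflow e) (by positivity) hden
    calc fhat e / (c e + μ e * βhat e)
        ≤ ((1 + ε) * fstar e) / ((1 - ε) * (c e + μ e * βstar e)) := h1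
      _ = ((1 + ε) / (1 - ε)) * (fstar e / (c e + μ e * βstar e)) := by
          field_simp
  have hsnn : 0 ≤ fstar e / (c e + μ e * βstar e) := div_nonneg (hfstar e) hce.le
  have hpow : (fhat e / (c e + μ e * βhat e)) ^ n e
      ≤ ((1 + ε) / (1 - ε)) ^ ν * (fstar e / (c e + μ e * βstar e)) ^ n e := by
    calc (fhat e / (c e + μ e * βhat e)) ^ n e
        ≤ (((1 + ε) / (1 - ε)) * (fstar e / (c e + μ e * βstar e))) ^ n e :=
          pow_le_pow_left₀ (div_nonneg (hfhat e) hdenpos.le) hratio _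
      _ = ((1 + ε) / (1 - ε)) ^ n e * (fstar e / (c e + μ e * βstar e)) ^ n e := by
          rw [mul_pow]
      _ ≤ ((1 + ε) / (1 - ε)) ^ ν * (fstar e / (c e + μ e * βstar e)) ^ n e := by
          apply mul_le_mul_of_nonneg_right _ (pow_nonneg hsnn _)
          exact pow_le_pow_right₀ (by linarith) (hnν e)
  have hbb : b e ≤ ((1 + ε) / (1 - ε)) ^ ν * b e :=
    le_mul_of_one_le_left (hb e) hrν
  calc (fhat e / (c e + μ e * βhat e)) ^ n e + b e
      ≤ ((1 + ε) / (1 - ε)) ^ ν * (fstar e / (c e + μ e * βstar e)) ^ n e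
        + ((1 + ε) / (1 - ε)) ^ ν * b e := add_le_add hpow hbb
    _ = ((1 + ε) / (1 - ε)) ^ ν * ((fstar e / (c e + μ e * βstar e)) ^ n e + b e) := by ring
end

section
/- Let L(β) = (d + Σ_{p∈P} c_p(β_p) b_p)/(Σ_{p∈P} c_p(β_p)) with each c_p : ℝ_{≥0} → ℝ_{>0} differentiable, and suppose at λ along a segment β(λ) between two allocations the derivative dL/dλ = (Σ_p (b_p − L(λ)) c_p'(λ))/(Σ_p c_p(λ)). If dL(λ')/dλ = 0 at some λ', L(λ') > b_p for all p, and each c_p(λ) is concave, then d²L(λ')/dλ² ≥ 0, i.e., every interior stationary point of the equilibrium delay along the segment is not a local maximum. -/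
open Set

theorem stmt_19 {P : Type*} [Fintype P] [Nonempty P]
    (b : P → ℝ) (d : ℝ) (hd : 0 < d)
    (c c' : P → ℝ → ℝ)
    (hcpos : ∀ p, ∀ l ∈ Icc (0 : ℝ) 1, 0 < c p l)
    (hcderiv : ∀ p, ∀ l ∈ Icc (0 : ℝ) 1, HasDerivAt (c p) (c' p l) l)
    (hcconc : ∀ p, ConcaveOn ℝ (Icc (0 : ℝ) 1) (c p))
    (L L' : ℝ → ℝ)
    (hLdef : ∀ l ∈ Icc (0 : ℝ) 1,
      L l = (d + ∑ p, c p l * b p) / (∑ p, c p l))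
    (hL' : ∀ l ∈ Icc (0 : ℝ) 1, HasDerivAt L (L' l) l)
    (hL'form : ∀ l ∈ Icc (0 : ℝ) 1,
      L' l = (∑ p, (b p - L l) * c' p l) / (∑ p, c p l))
    (l' : ℝ) (hl' : l' ∈ Ioo (0 : ℝ) 1)
    (L'' : ℝ) (hL'' : HasDerivAt L' L'' l')
    (hstat : L' l' = 0)
    (hinterior : ∀ p, b p < L l') :
    0 ≤ L'' := by
  obtain ⟨hl0, hl1⟩ := hl'
  have hl'mem : l' ∈ Icc (0 : ℝ) 1 := ⟨hl0.le, hl1.le⟩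
  set S : ℝ → ℝ := fun l => ∑ p, c p l with hS
  have hSpos : ∀ l ∈ Icc (0 : ℝ) 1, 0 < S l := fun l hl =>
    Finset.sum_pos (fun p _ => hcpos p l hl) Finset.univ_nonempty
  -- key algebraic identity
  have hA : ∀ l ∈ Icc (0 : ℝ) 1, L' l * S l = ∑ p, (b p - L l) * c' p l := by
    intro l hl
    rw [hL'form l hl, div_mul_cancel₀ _ (hSpos l hl).ne']
  -- c' is antitone on Icc 0 1
  have hanti : ∀ p, ∀ x ∈ Icc (0:ℝ) 1, ∀ y ∈ Icc (0:ℝ) 1, x ≤ y → c' p y ≤ c' p x := by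
    intro p x hx y hy hxy
    have h := (hcconc p).antitoneOn_deriv
      (fun z hz => (hcderiv p z hz).differentiableAt) hx hy hxy
    rwa [(hcderiv p x hx).deriv, (hcderiv p y hy).deriv] at h
  -- setup: u with l' < u < 1
  set u : ℝ := (l' + 1) / 2 with hu
  have hl'u : l' < u := by simp only [hu]; linarith
  have hu1 : u < 1 := by simp only [hu]; linarith
  have humem : u ∈ Icc (0:ℝ) 1 := ⟨by linarith, hu1.le⟩
  set B : ℝ := ∑ p, (|c' p l'| + |c' p u|) with hB
  have hS0 : 0 < S l' := hSpos l' hl'mem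
  -- the right filter
  set F := nhdsWithin l' (Ioi l') with hF
  -- slope of L tends to 0
  have hslopeL : Filter.Tendsto (fun l => (L l - L l') / (l - l')) F (nhds 0) := by
    have := hasDerivAt_iff_tendsto_slope.1 (hL' l' hl'mem)
    rw [hstat] at this
    have h2 := this.mono_left (nhdsWithin_mono l' (fun x hx => ne_of_gt hx))
    refine h2.congr (fun l => ?_)
    simp [slope_def_field]
  -- slope of L' tends to L''
  have hslopeL' : Filter.Tendsto (fun l => L' l / (l - l')) F (nhds L'') := by
    have := hasDerivAt_iff_tendsto_slope.1 hL''
    have h2 := this.mono_left (nhdsWithin_mono l' (fun x hx => ne_of_gt hx))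
    refine h2.congr (fun l => ?_)
    simp [slope_def_field, hstat]
  -- eventual facts
  have hev1 : ∀ᶠ l in F, l ∈ Ioo l' u := by
    exact Ioo_mem_nhdsGT_of_mem ⟨le_refl _, hl'u⟩
  have hScont : ContinuousAt S l' :=
    tendsto_finset_sum _ (fun p _ => (hcderiv p l' hl'mem).continuousAt)
  have hev2 : ∀ᶠ l in F, S l' / 2 < S l := by
    have : ∀ᶠ l in nhds l', S l' / 2 < S l :=
      hScont.eventually (eventually_gt_nhds (by linarith))
    exact this.filter_mono nhdsWithin_le_nhds
  -- define ψ
  set ψ : ℝ → ℝ := fun l => -((L l - L l') / (l - l')) * ((∑ p, c' p l) / S l) with hψ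
  -- eventual inequality ψ l ≤ L' l / (l - l')
  have hineq : ∀ᶠ l in F, ψ l ≤ L' l / (l - l') := by
    filter_upwards [hev1, hev2] with l hl1 hl2
    have hlmem : l ∈ Icc (0:ℝ) 1 := ⟨by linarith [hl1.1], by linarith [hl1.2]⟩
    have hll' : l' ≤ l := hl1.1.le
    have hSl : 0 < S l := hSpos l hlmem
    have hM : (0:ℝ) ≤ ∑ p, (b p - L l') * c' p l := by
      have h0 : (∑ p, (b p - L l') * c' p l') = 0 := by
        rw [← hA l' hl'mem, hstat, zero_mul]
      rw [← h0]
      apply Finset.sum_le_sum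
      intro p _
      have h1 : c' p l ≤ c' p l' := hanti p l' hl'mem l hlmem hll'
      have h2 : b p - L l' < 0 := by linarith [hinterior p]
      nlinarith
    have hkey : -(L l - L l') * (∑ p, c' p l) ≤ L' l * S l := by
      rw [hA l hlmem]
      have : (∑ p, (b p - L l) * c' p l)
          = (∑ p, (b p - L l') * c' p l) + (L l' - L l) * (∑ p, c' p l) := by
        rw [Finset.mul_sum, ← Finset.sum_add_distrib]
        exact Finset.sum_congr rfl (fun p _ => by ring)
      rw [this]
      nlinarith
    -- divide by S l and (l - l')
    have hstep : -(L l - L l') * (∑ p, c' p l) / S l ≤ L' l := by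
      rw [div_le_iff₀ hSl]
      exact hkey
    have hll : 0 < l - l' := by linarith [hl1.1]
    have heq : ψ l = (-(L l - L l') * (∑ p, c' p l) / S l) / (l - l') := by
      simp only [hψ]
      ring
    rw [heq]
    exact div_le_div_of_nonneg_right hstep hll.le
  -- ψ tends to 0
  have hψ0 : Filter.Tendsto ψ F (nhds 0) := by
    apply squeeze_zero_norm' (a := fun l => (2 * B / S l') * |(L l - L l') / (l - l')|)
    · filter_upwards [hev1, hev2] with l hl1 hl2
      have hlmem : l ∈ Icc (0:ℝ) 1 := ⟨by linarith [hl1.1], by linarith [hl1.2]⟩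
      have hSl : 0 < S l := hSpos l hlmem
      have hC : |∑ p, c' p l| ≤ B := by
        refine (Finset.abs_sum_le_sum_abs _ _).trans ?_
        apply Finset.sum_le_sum
        intro p _
        have h1 : c' p l ≤ c' p l' := hanti p l' hl'mem l hlmem hl1.1.le
        have h2 : c' p u ≤ c' p l := hanti p l hlmem u humem hl1.2.le
        rw [abs_le]
        constructor
        · have := neg_abs_le (c' p u); have := abs_nonneg (c' p l'); linarith
        · have := le_abs_self (c' p l'); have := abs_nonneg (c' p u); linarith
      have hB0 : 0 ≤ B := le_trans (abs_nonneg _) hC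
      show |(-((L l - L l') / (l - l')) * ((∑ p, c' p l) / S l))| ≤ _
      rw [abs_mul, abs_neg]
      rw [mul_comm]
      apply mul_le_mul _ (le_refl _) (abs_nonneg _) (div_nonneg (by linarith) hS0.le)
      rw [abs_div]
      rw [abs_of_pos hSl, div_le_div_iff₀ hSl hS0]
      calc |∑ p, c' p l| * S l' ≤ B * S l' :=
            mul_le_mul_of_nonneg_right hC hS0.le
        _ ≤ 2 * B * S l := by nlinarith
    · have : Filter.Tendsto (fun l => |(L l - L l') / (l - l')|) F (nhds 0) := by
        have := hslopeL.abs
        simpa using this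
      have h2 := this.const_mul (2 * B / S l')
      simpa using h2
  exact le_of_tendsto_of_tendsto hψ0 hslopeL' hineq
end
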